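/- arXiv:1503.07632 — 2 statements merged into one kernel-verified Lean document; each statement's English description precedes it below -/
import Mathlib

section
/- For ρ > 0, n ∈ ℕ₀ and x ∈ (-1,1), the fractional integral of the Legendre polynomial P_n satisfies I₋^ρ P_n(x) = [n!/Γ(n+ρ+1)] (1+x)^ρ P_n^{(-ρ,ρ)}(x). -/
open Real Filter Set

/-- Left-sided Riemann–Liouville fractional integral of order `ρ` with base point `a`. -/
noncomputable def fracInt (a ρ : ℝ) (u : ℝ → ℝ) (x : ℝ) : ℝ :=
  (1 / Real.Gamma ρ) * ∫ y in a..x, u y * (x - y) ^ (ρ - 1)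

/-- Left-sided Caputo fractional derivative of order `μ ∈ (k-1,k)` with base point `a`. -/
noncomputable def caputoD (k : ℕ) (μ a : ℝ) (u : ℝ → ℝ) : ℝ → ℝ :=
  fracInt a ((k : ℝ) - μ) (iteratedDeriv k u)

/-- Left-sided Riemann–Liouville fractional derivative of order `μ ∈ (k-1,k)` with base point `a`. -/
noncomputable def rlD (k : ℕ) (μ a : ℝ) (u : ℝ → ℝ) : ℝ → ℝ :=
  iteratedDeriv k (fracInt a ((k : ℝ) - μ) u)

/-- Jacobi polynomial `P_n^{(α,β)}` for general real parameters, via the terminating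
hypergeometric representation. -/
noncomputable def jacobiP (n : ℕ) (α β : ℝ) (x : ℝ) : ℝ :=
  (1 / (n.factorial : ℝ)) * ∑ m ∈ Finset.range (n + 1),
    (n.choose m : ℝ) * (∏ i ∈ Finset.range (n - m), (α + m + 1 + i)) *
    (∏ i ∈ Finset.range m, (α + β + n + 1 + i)) * ((x - 1) / 2) ^ m

/-- Legendre polynomial. -/
noncomputable def legendreP (n : ℕ) (x : ℝ) : ℝ := jacobiP n 0 0 x

/-!
Expanding `P_n` in powers of `1 + y`, the fractional integral acts termwise through the Beta
integral: `I₋^ρ (1 + y)^m = m! / Γ(m + 1 + ρ) · (1 + x)^(m + ρ)`. The expansion about `-1` comes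
from the reflection `P_n^{(α,β)}(-x) = (-1)^n P_n^{(β,α)}(x)`, which is the Chu–Vandermonde
identity for rising factorials. Applied to `P_n^{(-ρ,ρ)}` it gives the same series, the
coefficients matching because `Γ(n + ρ + 1) = Γ(m + 1 + ρ) (m + 1 + ρ)_{n - m}`.
-/

open Finset

section RisingProduct

variable {R : Type*} [CommRing R]

theorem ascPochhammer_eval_eq_prod_range (n : ℕ) (a : R) :
    (ascPochhammer R n).eval a = ∏ i ∈ range n, (a + i) := by
  induction n with
  | zero => simp
  | succ n ih => rw [ascPochhammer_succ_eval, ih, prod_range_succ]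

theorem descPochhammer_eval_neg (n : ℕ) (a : R) :
    (descPochhammer R n).eval (-a) = (-1) ^ n * (ascPochhammer R n).eval a := by
  rw [← neg_neg a, ascPochhammer_eval_neg_eq_descPochhammer, neg_neg, ← mul_assoc, ← mul_pow,
    neg_one_mul, neg_neg, one_pow, one_mul]

theorem prod_range_add_add_eq_sum (a b : R) (r : ℕ) :
    ∏ i ∈ range r, (a + b + i) =
      ∑ j ∈ range (r + 1), (r.choose j : R) * (∏ i ∈ range j, (a + i)) *
        ∏ i ∈ range (r - j), (b + i) := by
  have h := Ring.descPochhammer_smeval_add (R := R) r (Commute.all (-a) (-b))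
  simp only [Polynomial.descPochhammer_smeval_eq_ascPochhammer,
    Polynomial.ascPochhammer_smeval_eq_eval, ← descPochhammer_eval_eq_ascPochhammer,
    ← neg_add, descPochhammer_eval_neg, Nat.sum_antidiagonal_eq_sum_range_succ_mk] at h
  simp only [← ascPochhammer_eval_eq_prod_range]
  refine ((isUnit_neg_one (α := R)).pow r).mul_left_cancel (h.trans ?_)
  rw [mul_sum]
  refine sum_congr rfl fun j hj => ?_
  have hsign : (-1 : R) ^ j * (-1) ^ (r - j) = (-1) ^ r := by
    rw [← pow_add, Nat.add_sub_cancel' (mem_range_succ_iff.mp hj)]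
  linear_combination (r.choose j : R) * (ascPochhammer R j).eval a *
    (ascPochhammer R (r - j)).eval b * hsign

theorem prod_range_add_eq_neg_one_pow_mul (a : R) (s : ℕ) :
    ∏ i ∈ range s, (a + i) = (-1) ^ s * ∏ i ∈ range s, (-(a + s - 1) + i) := by
  simp only [← ascPochhammer_eval_eq_prod_range, ← descPochhammer_eval_neg,
    descPochhammer_eval_eq_ascPochhammer]
  ring_nf

theorem jacobiP_neg_coeff (α β : R) {n k : ℕ} (hk : k ≤ n) :
    ∑ m ∈ Ico k (n + 1), (-1) ^ m * (n.choose m : R) * (m.choose k : R) *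
        (∏ i ∈ range (n - m), (α + m + 1 + i)) * ∏ i ∈ range m, (α + β + n + 1 + i) =
      (-1) ^ n * (n.choose k : R) * (∏ i ∈ range (n - k), (β + k + 1 + i)) *
        ∏ i ∈ range k, (β + α + n + 1 + i) := by
  -- With `m = k + j` the sum is `prod_range_add_add_eq_sum` at `α + β + n + 1 + k` and `-(α + n)`.
  obtain ⟨r, rfl⟩ := Nat.exists_eq_add_of_le hk
  have hterm : ∀ j ∈ range (r + 1),
      (-1) ^ (k + j) * ((k + r).choose (k + j) : R) * ((k + j).choose k : R) *
          (∏ i ∈ range (k + r - (k + j)), (α + (k + j : ℕ) + 1 + i)) *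
          ∏ i ∈ range (k + j), (α + β + (k + r : ℕ) + 1 + i) =
        (-1) ^ (k + r) * ((k + r).choose k : R) * (∏ i ∈ range k, (α + β + (k + r : ℕ) + 1 + i)) *
          ((r.choose j : R) * (∏ i ∈ range j, (α + β + (k + r : ℕ) + 1 + k + i)) *
            ∏ i ∈ range (r - j), (-(α + (k + r : ℕ)) + i)) := by
    intro j hj
    obtain ⟨s, rfl⟩ := Nat.exists_eq_add_of_le (mem_range_succ_iff.mp hj)
    have hchoose : ((k + (j + s)).choose (k + j) : R) * ((k + j).choose k : R) =
        ((k + (j + s)).choose k : R) * ((j + s).choose j : R) := by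
      have := Nat.choose_mul (n := k + (j + s)) (k := k + j) (s := k) (by omega)
      rw [Nat.add_sub_cancel_left, Nat.add_sub_cancel_left] at this
      exact_mod_cast congrArg (Nat.cast : ℕ → R) this
    rw [show k + (j + s) - (k + j) = s by omega, Nat.add_sub_cancel_left,
      prod_range_add_eq_neg_one_pow_mul _ s, prod_range_add]
    have hfirst : ∏ i ∈ range s, (-(α + (k + j : ℕ) + 1 + s - 1) + i) =
        ∏ i ∈ range s, (-(α + (k + (j + s) : ℕ)) + i) :=
      prod_congr rfl fun i _ => by push_cast; ring
    have hsecond : ∏ i ∈ range j, (α + β + (k + (j + s) : ℕ) + 1 + (k + i : ℕ)) =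
        ∏ i ∈ range j, (α + β + (k + (j + s) : ℕ) + 1 + k + i) :=
      prod_congr rfl fun i _ => by push_cast; ring
    rw [hfirst, hsecond]
    linear_combination (-1) ^ (k + j + s) * (∏ i ∈ range s, (-(α + (k + (j + s) : ℕ)) + i)) *
      (∏ i ∈ range k, (α + β + (k + (j + s) : ℕ) + 1 + i)) *
      (∏ i ∈ range j, (α + β + (k + (j + s) : ℕ) + 1 + k + i)) * hchoose
  rw [sum_Ico_eq_sum_range, show k + r + 1 - k = r + 1 by omega, sum_congr rfl hterm, ← mul_sum,
    ← prod_range_add_add_eq_sum, Nat.add_sub_cancel_left]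
  have hlast : ∏ i ∈ range r, (α + β + (k + r : ℕ) + 1 + k + -(α + (k + r : ℕ)) + i) =
      ∏ i ∈ range r, (β + k + 1 + i) :=
    prod_congr rfl fun i _ => by push_cast; ring
  rw [hlast, add_comm β α]
  ring

end RisingProduct

theorem jacobiP_neg (n : ℕ) (α β x : ℝ) :
    jacobiP n α β (-x) = (-1) ^ n * jacobiP n β α x := by
  have hexpand : ∀ m : ℕ, ((-x - 1) / 2) ^ m =
      ∑ k ∈ range (m + 1), (-1) ^ m * (m.choose k : ℝ) * ((x - 1) / 2) ^ k := by
    intro m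
    rw [show (-x - 1) / 2 = -1 * ((x - 1) / 2 + 1) by ring, mul_pow, add_pow, mul_sum]
    exact sum_congr rfl fun k _ => by ring
  have hswap : ∀ g : ℕ → ℕ → ℝ, ∑ m ∈ range (n + 1), ∑ k ∈ range (m + 1), g m k =
      ∑ k ∈ range (n + 1), ∑ m ∈ Ico k (n + 1), g m k := fun g => by
    simpa only [range_eq_Ico] using (sum_Ico_Ico_comm 0 (n + 1) fun k m => g m k).symm
  unfold jacobiP
  simp only [hexpand, mul_sum]
  rw [hswap]
  refine sum_congr rfl fun k hk => ?_
  calc _ = 1 / (n.factorial : ℝ) * ((x - 1) / 2) ^ k *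
        ∑ m ∈ Ico k (n + 1), (-1) ^ m * (n.choose m : ℝ) * (m.choose k : ℝ) *
          (∏ i ∈ range (n - m), (α + m + 1 + i)) * ∏ i ∈ range m, (α + β + n + 1 + i) := by
        rw [mul_sum]
        exact sum_congr rfl fun m _ => by ring
    _ = _ := by
        rw [jacobiP_neg_coeff α β (mem_range_succ_iff.mp hk)]
        ring

theorem Real.integral_rpow_mul_one_sub_rpow {s t : ℝ} (hs : 0 < s) (ht : 0 < t) :
    ∫ u in (0 : ℝ)..1, u ^ (s - 1) * (1 - u) ^ (t - 1) = Gamma s * Gamma t / Gamma (s + t) := by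
  have hB := Complex.Gamma_mul_Gamma_eq_betaIntegral (s := s) (t := t) (by simpa) (by simpa)
  have hreal : Complex.betaIntegral s t =
      ((∫ u in (0 : ℝ)..1, u ^ (s - 1) * (1 - u) ^ (t - 1) : ℝ) : ℂ) := by
    rw [Complex.betaIntegral, ← intervalIntegral.integral_ofReal]
    refine intervalIntegral.integral_congr fun u hu => ?_
    rw [Set.uIcc_of_le zero_le_one] at hu
    simp only [Complex.ofReal_mul, Complex.ofReal_cpow hu.1,
      Complex.ofReal_cpow (sub_nonneg.mpr hu.2), Complex.ofReal_sub, Complex.ofReal_one]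
  rw [hreal, ← Complex.ofReal_add, Complex.Gamma_ofReal, Complex.Gamma_ofReal,
    Complex.Gamma_ofReal] at hB
  rw [eq_div_iff (Gamma_pos_of_pos (add_pos hs ht)).ne']
  exact_mod_cast (hB.trans (mul_comm _ _)).symm

theorem Real.Gamma_add_nat_eq_mul_prod {z : ℝ} (hz : 0 < z) (r : ℕ) :
    Gamma (z + r) = Gamma z * ∏ i ∈ range r, (z + i) := by
  induction r with
  | zero => simp
  | succ r ih =>
    rw [Nat.cast_succ, ← add_assoc, Gamma_add_one (by positivity), ih, prod_range_succ]
    ring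

theorem intervalIntegrable_sub_pow_mul_sub_rpow (a x : ℝ) {ρ : ℝ} (hρ : 0 < ρ) (k : ℕ) :
    IntervalIntegrable (fun y => (y - a) ^ k * (x - y) ^ (ρ - 1)) MeasureTheory.volume a x := by
  have h := (intervalIntegral.intervalIntegrable_rpow' (a := 0) (b := x - a)
    (by linarith : -1 < ρ - 1)).comp_sub_left x
  rw [sub_zero, sub_sub_cancel] at h
  exact h.symm.continuousOn_mul (by fun_prop)

theorem integral_sub_pow_mul_sub_rpow {a x ρ : ℝ} (hax : a < x) (hρ : 0 < ρ) (k : ℕ) :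
    ∫ y in a..x, (y - a) ^ k * (x - y) ^ (ρ - 1) =
      Gamma (k + 1) * Gamma ρ / Gamma (k + 1 + ρ) * (x - a) ^ (k + ρ) := by
  have hxa : 0 < x - a := sub_pos.mpr hax
  have hsubst := intervalIntegral.smul_integral_comp_mul_add
    (fun y => (y - a) ^ k * (x - y) ^ (ρ - 1)) (a := 0) (b := 1) (x - a) a
  rw [mul_zero, zero_add, mul_one, sub_add_cancel] at hsubst
  rw [← hsubst]
  have hintegrand : ∀ t ∈ Set.uIcc (0 : ℝ) 1,
      ((x - a) * t + a - a) ^ k * (x - ((x - a) * t + a)) ^ (ρ - 1) =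
        (x - a) ^ k * (x - a) ^ (ρ - 1) * (t ^ ((k + 1 : ℝ) - 1) * (1 - t) ^ (ρ - 1)) := by
    intro t ht
    rw [Set.uIcc_of_le zero_le_one] at ht
    rw [add_sub_cancel_right, show x - ((x - a) * t + a) = (x - a) * (1 - t) by ring,
      mul_rpow hxa.le (sub_nonneg.mpr ht.2), add_sub_cancel_right, rpow_natCast, mul_pow]
    ring
  rw [intervalIntegral.integral_congr hintegrand, intervalIntegral.integral_const_mul,
    Real.integral_rpow_mul_one_sub_rpow (by positivity) hρ, smul_eq_mul,
    rpow_add hxa, rpow_natCast, show (x - a) ^ ρ = (x - a) ^ (ρ - 1) * (x - a) by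
      rw [← rpow_add_one hxa.ne', sub_add_cancel]]
  ring

theorem fracInt_sum_mul_sub_pow {a ρ x : ℝ} (hax : a < x) (hρ : 0 < ρ) (s : Finset ℕ)
    (c : ℕ → ℝ) :
    fracInt a ρ (fun y => ∑ k ∈ s, c k * (y - a) ^ k) x =
      ∑ k ∈ s, c k * (Gamma (k + 1) / Gamma (k + 1 + ρ) * (x - a) ^ (k + ρ)) := by
  have hΓ : Gamma ρ ≠ 0 := (Gamma_pos_of_pos hρ).ne'
  unfold fracInt
  simp only [sum_mul, mul_assoc]
  rw [intervalIntegral.integral_finsetSum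
      fun k _ => (intervalIntegrable_sub_pow_mul_sub_rpow a x hρ k).const_mul (c k), mul_sum]
  refine sum_congr rfl fun k _ => ?_
  rw [intervalIntegral.integral_const_mul, integral_sub_pow_mul_sub_rpow hax hρ]
  field_simp

theorem jacobiP_eq_sum_one_add_pow (n : ℕ) (α β x : ℝ) :
    jacobiP n α β x = (-1) ^ n / n.factorial * ∑ m ∈ range (n + 1),
      (n.choose m : ℝ) * (∏ i ∈ range (n - m), (β + m + 1 + i)) *
        (∏ i ∈ range m, (β + α + n + 1 + i)) * (-(1 + x) / 2) ^ m := by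
  have h := jacobiP_neg n β α x
  rw [show jacobiP n α β x = (-1) ^ n * jacobiP n β α (-x) by
    rw [h, ← mul_assoc, ← mul_pow, neg_one_mul, neg_neg, one_pow, one_mul], jacobiP]
  simp only [show (-x - 1) / 2 = -(1 + x) / 2 by ring]
  ring

theorem factorial_div_Gamma_mul_prod {ρ : ℝ} (hρ : 0 < ρ) {m n : ℕ} (hmn : m ≤ n) :
    (n.factorial : ℝ) / Gamma (n + ρ + 1) * ∏ i ∈ range (n - m), (ρ + m + 1 + i) =
      Gamma (m + 1) * (∏ i ∈ range (n - m), ((m : ℝ) + 1 + i)) / Gamma (m + 1 + ρ) := by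
  have hfactorial : Gamma (m + 1) * ∏ i ∈ range (n - m), ((m : ℝ) + 1 + i) = n.factorial := by
    rw [← Gamma_add_nat_eq_mul_prod (by positivity), Nat.cast_sub hmn,
      show (m : ℝ) + 1 + (n - m) = n + 1 by ring, Gamma_nat_eq_factorial]
  have hGamma : Gamma (n + ρ + 1) = Gamma (m + 1 + ρ) * ∏ i ∈ range (n - m), (ρ + m + 1 + i) := by
    rw [show (n : ℝ) + ρ + 1 = m + 1 + ρ + (n - m : ℕ) by push_cast [hmn]; ring,
      Gamma_add_nat_eq_mul_prod (by positivity)]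
    exact congrArg _ (prod_congr rfl fun i _ => by ring)
  have hprod : 0 < ∏ i ∈ range (n - m), (ρ + m + 1 + i) := prod_pos fun i _ => by positivity
  rw [hGamma, hfactorial]
  field_simp

theorem stmt8 (ρ : ℝ) (hρ : 0 < ρ) (n : ℕ) (x : ℝ) (hx : x ∈ Set.Ioo (-1 : ℝ) 1) :
    fracInt (-1) ρ (legendreP n) x
      = (n.factorial : ℝ) / Real.Gamma (n + ρ + 1) * (1 + x) ^ ρ * jacobiP n (-ρ) ρ x := by
  have hlegendre : legendreP n = fun y => ∑ m ∈ range (n + 1),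
      ((-1) ^ n / n.factorial * (n.choose m : ℝ) * (∏ i ∈ range (n - m), ((m : ℝ) + 1 + i)) *
        (∏ i ∈ range m, ((n : ℝ) + 1 + i)) * (-1 / 2) ^ m) * (y - -1) ^ m := by
    funext y
    rw [legendreP, jacobiP_eq_sum_one_add_pow, mul_sum]
    refine sum_congr rfl fun m _ => ?_
    rw [show -(1 + y) / 2 = -1 / 2 * (y - -1) by ring, mul_pow]
    simp only [zero_add]
    ring
  have hpos : 0 < 1 + x := by linarith [hx.1]
  rw [hlegendre, fracInt_sum_mul_sub_pow hx.1 hρ, jacobiP_eq_sum_one_add_pow, mul_sum, mul_sum]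
  refine sum_congr rfl fun m hm => ?_
  rw [sub_neg_eq_add, add_comm x 1, rpow_add hpos, rpow_natCast,
    show -(1 + x) / 2 = -1 / 2 * (1 + x) by ring, mul_pow]
  simp only [add_neg_cancel, zero_add]
  linear_combination (-1) ^ n / n.factorial * (n.choose m : ℝ) *
    (∏ i ∈ range m, ((n : ℝ) + 1 + i)) * (-1 / 2) ^ m * (1 + x) ^ m * (1 + x) ^ ρ *
    (factorial_div_Gamma_mul_prod hρ (mem_range_succ_iff.mp hm)).symm
end

section
/- Let μ ∈ (k-1,k) with k ∈ {1,2}, and define the modified Riemann–Liouville operator ᴿD̂₋^μ u(x) = (1+x)^μ (ᴿD₋^μ u)(x). Then for any polynomial f of degree ≤ N with f(-1) = 0, the equation ᴿD̂₋^μ u = f with u(-1) = 0 has a unique polynomial solution u of degree ≤ N, given explicitly by u(x) = I₋^μ { (1+x)^{-μ} f(x) }. -/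
/-!
By the Beta integral, `I₋^ρ (1+y)^s = Γ(s+1)/Γ(s+1+ρ) · (1+x)^(s+ρ)` for `s > -1`. Differentiating
`k` times, `ᴿD̂₋^μ` maps `(1+x)^n` to `Γ(n+1)/Γ(n+1-μ) · (1+x)^n`, so on polynomials it multiplies the
`n`-th Taylor coefficient at `-1` by this factor, which is nonzero because `μ` is not an integer.
On polynomials vanishing at `-1` the exponents `n - μ` of `(1+x)^(-μ) f` exceed `-1` (as `μ < 2`),
and `I₋^μ` divides the same coefficients by the same factors.
-/

open Real Filter Set

/-- Modified Riemann–Liouville fractional derivative `ᴿD̂₋^μ u(x) = (1+x)^μ ᴿD₋^μ u(x)`. -/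
noncomputable def rlDHat (k : ℕ) (μ : ℝ) (u : ℝ → ℝ) (x : ℝ) : ℝ :=
  (1 + x) ^ μ * rlD k μ (-1) u x

open intervalIntegral MeasureTheory Polynomial

namespace Real

-- Unlike `Gamma_add_one`, this also holds at the poles, where Mathlib's `Gamma` is `0`.
theorem inv_Gamma_eq_self_mul_inv_Gamma_add_one (s : ℝ) :
    (Gamma s)⁻¹ = s * (Gamma (s + 1))⁻¹ := by
  rcases ne_or_eq s 0 with hs | rfl
  · rw [Gamma_add_one hs, mul_inv, mul_inv_cancel_left₀ hs]
  · rw [zero_add, Gamma_zero, inv_zero, zero_mul]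

theorem inv_Gamma_sub_nat (r : ℝ) (k : ℕ) :
    (Gamma (r + 1 - k))⁻¹ = (descPochhammer ℝ k).eval r * (Gamma (r + 1))⁻¹ := by
  induction k with
  | zero => simp
  | succ k ih =>
    rw [inv_Gamma_eq_self_mul_inv_Gamma_add_one, descPochhammer_succ_eval,
      show r + 1 - ↑(k + 1) + 1 = r + 1 - k by push_cast; ring, ih]
    push_cast
    ring

theorem integral_rpow_mul_one_sub_rpow_s14 {s t : ℝ} (hs : 0 < s) (ht : 0 < t) :
    ∫ τ in (0 : ℝ)..1, τ ^ (s - 1) * (1 - τ) ^ (t - 1) = Gamma s * Gamma t / Gamma (s + t) := by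
  have hB : Complex.betaIntegral s t = ↑(∫ τ in (0 : ℝ)..1, τ ^ (s - 1) * (1 - τ) ^ (t - 1)) := by
    rw [Complex.betaIntegral, ← intervalIntegral.integral_ofReal]
    refine integral_congr fun τ hτ => ?_
    rw [uIcc_of_le zero_le_one] at hτ
    push_cast
    rw [Complex.ofReal_cpow hτ.1, Complex.ofReal_cpow (sub_nonneg.2 hτ.2)]
    push_cast
    rfl
  have h := Complex.Gamma_mul_Gamma_eq_betaIntegral (s := s) (t := t) (by simpa) (by simpa)
  rw [hB, ← Complex.ofReal_add, Complex.Gamma_ofReal, Complex.Gamma_ofReal,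
    Complex.Gamma_ofReal] at h
  have hΓ : Gamma (s + t) ≠ 0 := (Gamma_pos_of_pos (add_pos hs ht)).ne'
  rw [eq_div_iff hΓ, mul_comm]
  exact_mod_cast h.symm

end Real

theorem integral_sub_rpow_mul_sub_rpow {a x s t : ℝ} (hax : a < x) (hs : 0 < s) (ht : 0 < t) :
    ∫ y in a..x, (y - a) ^ (s - 1) * (x - y) ^ (t - 1)
      = Real.Gamma s * Real.Gamma t / Real.Gamma (s + t) * (x - a) ^ (s + t - 1) := by
  have hc : 0 < x - a := sub_pos.2 hax
  have hsub := smul_integral_comp_add_mul (a := 0) (b := 1)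
    (fun y => (y - a) ^ (s - 1) * (x - y) ^ (t - 1)) (x - a) a
  rw [mul_zero, add_zero, mul_one, add_sub_cancel] at hsub
  rw [← hsub, smul_eq_mul, ← Real.integral_rpow_mul_one_sub_rpow_s14 hs ht,
    ← intervalIntegral.integral_const_mul, ← intervalIntegral.integral_mul_const]
  refine integral_congr fun τ hτ => ?_
  rw [uIcc_of_le zero_le_one] at hτ
  rw [add_sub_cancel_left, show x - (a + (x - a) * τ) = (x - a) * (1 - τ) by ring,
    Real.mul_rpow hc.le hτ.1, Real.mul_rpow hc.le (sub_nonneg.2 hτ.2),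
    show s + t - 1 = (s - 1) + (t - 1) + 1 by ring, Real.rpow_add hc, Real.rpow_add hc,
    Real.rpow_one]
  ring

theorem fracInt_sub_rpow {a ρ s x : ℝ} (hρ : 0 < ρ) (hs : -1 < s) (hax : a < x) :
    fracInt a ρ (fun y => (y - a) ^ s) x
      = Real.Gamma (s + 1) / Real.Gamma (s + 1 + ρ) * (x - a) ^ (s + ρ) := by
  have h := integral_sub_rpow_mul_sub_rpow hax (neg_lt_iff_pos_add.1 hs) hρ
  rw [add_sub_cancel_right, show s + 1 + ρ - 1 = s + ρ by ring] at h
  rw [fracInt, h]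
  have hΓ : Real.Gamma ρ ≠ 0 := (Real.Gamma_pos_of_pos hρ).ne'
  field_simp

theorem intervalIntegrable_sub_rpow_mul_sub_rpow {a x s ρ : ℝ} (hρ : 0 < ρ) (hs : -1 < s)
    (hax : a < x) :
    IntervalIntegrable (fun y => (y - a) ^ s * (x - y) ^ (ρ - 1)) volume a x := by
  refine intervalIntegrable_of_integral_ne_zero ?_
  have hs' : 0 < s + 1 := neg_lt_iff_pos_add.1 hs
  have h := integral_sub_rpow_mul_sub_rpow hax hs' hρ
  rw [add_sub_cancel_right] at h
  rw [h]
  have := Real.Gamma_pos_of_pos hs'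
  have := Real.Gamma_pos_of_pos hρ
  have := Real.Gamma_pos_of_pos (add_pos hs' hρ)
  have := Real.rpow_pos_of_pos (sub_pos.2 hax) (s + 1 + ρ - 1)
  positivity

theorem fracInt_sum_sub_rpow {ι : Type*} (S : Finset ι) (c s : ι → ℝ) {a ρ x : ℝ} (hρ : 0 < ρ)
    (hs : ∀ i ∈ S, -1 < s i) (hax : a < x) :
    fracInt a ρ (fun y => ∑ i ∈ S, c i * (y - a) ^ s i) x
      = ∑ i ∈ S, c i * (Real.Gamma (s i + 1) / Real.Gamma (s i + 1 + ρ)) * (x - a) ^ (s i + ρ) := by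
  have hint : ∀ i ∈ S, IntervalIntegrable (fun y => c i * ((y - a) ^ s i * (x - y) ^ (ρ - 1)))
      volume a x := fun i hi =>
    (intervalIntegrable_sub_rpow_mul_sub_rpow hρ (hs i hi) hax).const_mul (c i)
  simp only [fracInt, Finset.sum_mul, mul_assoc]
  rw [intervalIntegral.integral_finsetSum hint, Finset.mul_sum]
  refine Finset.sum_congr rfl fun i hi => ?_
  have h := fracInt_sub_rpow hρ (hs i hi) hax
  rw [fracInt] at h
  rw [intervalIntegral.integral_const_mul, mul_left_comm, h]

theorem iteratedDeriv_eqOn_sum_sub_rpow {ι : Type*} (S : Finset ι) (c r : ι → ℝ) {a : ℝ}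
    {F : ℝ → ℝ} (hF : EqOn F (fun y => ∑ i ∈ S, c i * (y - a) ^ r i) (Ioi a)) (k : ℕ) :
    EqOn (iteratedDeriv k F)
      (fun y => ∑ i ∈ S, c i * (descPochhammer ℝ k).eval (r i) * (y - a) ^ (r i - k)) (Ioi a) := by
  induction k with
  | zero => simpa using hF
  | succ k ih =>
    intro x hx
    have hxa : x - a ≠ 0 := (sub_pos.2 hx).ne'
    have hderiv : HasDerivAt
        (fun y => ∑ i ∈ S, c i * (descPochhammer ℝ k).eval (r i) * (y - a) ^ (r i - k))
        (∑ i ∈ S, c i * (descPochhammer ℝ (k + 1)).eval (r i) * (x - a) ^ (r i - ↑(k + 1))) x := by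
      refine HasDerivAt.fun_sum fun i _ => ?_
      have h := (((hasDerivAt_id x).sub_const a).rpow_const (p := r i - k) (Or.inl hxa)).const_mul
        (c i * (descPochhammer ℝ k).eval (r i))
      refine h.congr_deriv ?_
      rw [descPochhammer_succ_eval]
      push_cast
      simp only [id, sub_sub]
      ring
    rw [iteratedDeriv_succ, (ih.eventuallyEq_of_mem (Ioi_mem_nhds hx)).deriv_eq, hderiv.deriv]

theorem rlD_sum_sub_rpow {ι : Type*} (S : Finset ι) (c s : ι → ℝ) {k : ℕ} {μ a x : ℝ}
    (hμ : μ < k) (hs : ∀ i ∈ S, -1 < s i) (hax : a < x) :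
    rlD k μ a (fun y => ∑ i ∈ S, c i * (y - a) ^ s i) x
      = ∑ i ∈ S, c i * (Real.Gamma (s i + 1) / Real.Gamma (s i + 1 - μ)) * (x - a) ^ (s i - μ) := by
  have hρ : 0 < (k : ℝ) - μ := sub_pos.2 hμ
  have hI : EqOn (fracInt a (k - μ) (fun y => ∑ i ∈ S, c i * (y - a) ^ s i))
      (fun y => ∑ i ∈ S, c i * (Real.Gamma (s i + 1) / Real.Gamma (s i + 1 + (k - μ)))
        * (y - a) ^ (s i + (k - μ))) (Ioi a) :=
    fun y hy => fracInt_sum_sub_rpow S c s hρ hs hy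
  rw [rlD, iteratedDeriv_eqOn_sum_sub_rpow S _ _ hI k hax]
  refine Finset.sum_congr rfl fun i _ => ?_
  have hΓ := Real.inv_Gamma_sub_nat (s i + (k - μ)) k
  rw [show s i + (k - μ) + 1 - k = s i + 1 - μ by ring] at hΓ
  rw [show s i + (k - μ) - k = s i - μ by ring, div_eq_mul_inv, div_eq_mul_inv, hΓ,
    show s i + 1 + (k - μ) = s i + (k - μ) + 1 by ring]
  ring

section CoeffScale

variable {K : Type*} [Field K]

noncomputable def coeffScale (c : ℕ → K) (p : K[X]) : K[X] :=
  p.sum fun n b => monomial n (c n * b)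

@[simp]
theorem coeff_coeffScale (c : ℕ → K) (p : K[X]) (n : ℕ) :
    (coeffScale c p).coeff n = c n * p.coeff n := by
  simp only [coeffScale, Polynomial.sum, finsetSum_coeff, coeff_monomial]
  rw [Finset.sum_ite_eq']
  split_ifs with h
  · rfl
  · rw [notMem_support_iff.1 h, mul_zero]

theorem coeffScale_coeffScale (c d : ℕ → K) (p : K[X]) :
    coeffScale c (coeffScale d p) = coeffScale (c * d) p := by
  ext n
  simp [mul_assoc]

theorem coeffScale_one (p : K[X]) : coeffScale 1 p = p := by
  ext n
  simp

theorem natDegree_coeffScale_le (c : ℕ → K) (p : K[X]) :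
    (coeffScale c p).natDegree ≤ p.natDegree :=
  natDegree_le_iff_coeff_eq_zero.2 fun n hn => by
    rw [coeff_coeffScale, coeff_eq_zero_of_natDegree_lt hn, mul_zero]

theorem eval_coeffScale (c : ℕ → K) (p : K[X]) (x : K) :
    (coeffScale c p).eval x = ∑ n ∈ p.support, c n * p.coeff n * x ^ n := by
  simp [coeffScale, Polynomial.sum, eval_finsetSum]

noncomputable def taylorScale (a : K) (c : ℕ → K) (p : K[X]) : K[X] :=
  taylor (-a) (coeffScale c (taylor a p))

theorem taylor_taylorScale (a : K) (c : ℕ → K) (p : K[X]) :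
    taylor a (taylorScale a c p) = coeffScale c (taylor a p) := by
  rw [taylorScale, taylor_taylor, add_neg_cancel, taylor_zero]

theorem eval_taylorScale (a : K) (c : ℕ → K) (p : K[X]) (x : K) :
    (taylorScale a c p).eval x = (coeffScale c (taylor a p)).eval (x - a) := by
  rw [taylorScale, taylor_eval, sub_eq_add_neg]

theorem eval_taylorScale_self (a : K) (c : ℕ → K) (p : K[X]) :
    (taylorScale a c p).eval a = c 0 * p.eval a := by
  rw [eval_taylorScale, sub_self, ← coeff_zero_eq_eval_zero, coeff_coeffScale, taylor_coeff_zero]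

theorem taylorScale_taylorScale (a : K) (c d : ℕ → K) (p : K[X]) :
    taylorScale a c (taylorScale a d p) = taylorScale a (c * d) p := by
  rw [taylorScale, taylor_taylorScale, coeffScale_coeffScale, taylorScale]

theorem taylorScale_one (a : K) (p : K[X]) : taylorScale a 1 p = p := by
  rw [taylorScale, coeffScale_one, taylor_taylor, neg_add_cancel, taylor_zero]

theorem taylorScale_taylorScale_inv (a : K) {c : ℕ → K} (hc : ∀ n, c n ≠ 0) (p : K[X]) :
    taylorScale a c (taylorScale a c⁻¹ p) = p := by
  have hcc : c * c⁻¹ = 1 := funext fun n => mul_inv_cancel₀ (hc n)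
  rw [taylorScale_taylorScale, hcc, taylorScale_one]

theorem taylorScale_injective (a : K) {c : ℕ → K} (hc : ∀ n, c n ≠ 0) :
    Function.Injective (taylorScale a c) := by
  refine Function.LeftInverse.injective (g := taylorScale a c⁻¹) fun p => ?_
  simpa using taylorScale_taylorScale_inv a (c := c⁻¹) (fun n => inv_ne_zero (hc n)) p

theorem natDegree_taylorScale_le (a : K) (c : ℕ → K) (p : K[X]) :
    (taylorScale a c p).natDegree ≤ p.natDegree := by
  simpa [taylorScale, natDegree_taylor] using natDegree_coeffScale_le c (taylor a p)

end CoeffScale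

theorem fracInt_congr {a ρ x : ℝ} {u v : ℝ → ℝ} (hax : a ≤ x) (h : EqOn u v (Ioc a x)) :
    fracInt a ρ u x = fracInt a ρ v x := by
  simp only [fracInt, intervalIntegral.integral_of_le hax]
  congr 1
  exact setIntegral_congr_fun measurableSet_Ioc fun y hy => by rw [h hy]

theorem eval_eq_sum_taylor_sub_rpow (p : ℝ[X]) (a y : ℝ) :
    p.eval y = ∑ n ∈ (taylor a p).support, (taylor a p).coeff n * (y - a) ^ (n : ℝ) := by
  conv_lhs => rw [← sub_add_cancel y a, ← taylor_eval, eval_eq_sum, Polynomial.sum]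
  simp only [Real.rpow_natCast]

noncomputable def rlDHatEigenvalue (μ : ℝ) (n : ℕ) : ℝ :=
  Real.Gamma (n + 1) / Real.Gamma (n + 1 - μ)

theorem rlDHatEigenvalue_ne_zero {μ : ℝ} (hμ : ∀ m : ℕ, μ ≠ m) (n : ℕ) :
    rlDHatEigenvalue μ n ≠ 0 := by
  refine div_ne_zero (Real.Gamma_pos_of_pos (by positivity)).ne' (Real.Gamma_ne_zero fun m h => ?_)
  exact hμ (n + 1 + m) (by push_cast; linarith)

theorem sub_rpow_mul_rlD_eval (p : ℝ[X]) {k : ℕ} {μ a x : ℝ} (hμ : μ < k) (hax : a < x) :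
    (x - a) ^ μ * rlD k μ a (fun y => p.eval y) x
      = (taylorScale a (rlDHatEigenvalue μ) p).eval x := by
  have hs : ∀ n ∈ (taylor a p).support, (-1 : ℝ) < n := fun n _ => by
    linarith [Nat.cast_nonneg (α := ℝ) n]
  rw [funext (eval_eq_sum_taylor_sub_rpow p a), rlD_sum_sub_rpow _ _ _ hμ hs hax,
    eval_taylorScale, eval_coeffScale, Finset.mul_sum]
  refine Finset.sum_congr rfl fun n _ => ?_
  rw [rlDHatEigenvalue, ← Real.rpow_natCast, ← add_sub_cancel μ (n : ℝ),
    Real.rpow_add (sub_pos.2 hax), add_sub_cancel_left]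
  ring

theorem fracInt_sub_rpow_neg_mul_eval (p : ℝ[X]) {μ a x : ℝ} (hμ₀ : 0 < μ) (hμ₂ : μ < 2)
    (hp : p.eval a = 0) (hax : a < x) :
    fracInt a μ (fun y => (y - a) ^ (-μ) * p.eval y) x
      = (taylorScale a (rlDHatEigenvalue μ)⁻¹ p).eval x := by
  have hs : ∀ n ∈ (taylor a p).support, (-1 : ℝ) < n - μ := fun n hn => by
    have hn0 : n ≠ 0 := by
      rintro rfl
      exact mem_support_iff.1 hn (by rw [taylor_coeff_zero, hp])
    have : (1 : ℝ) ≤ n := by exact_mod_cast Nat.one_le_iff_ne_zero.2 hn0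
    linarith
  have hcongr : EqOn (fun y => (y - a) ^ (-μ) * p.eval y)
      (fun y => ∑ n ∈ (taylor a p).support, (taylor a p).coeff n * (y - a) ^ ((n : ℝ) - μ))
      (Ioc a x) := fun y hy => by
    simp only [eval_eq_sum_taylor_sub_rpow p a y, Finset.mul_sum, sub_eq_neg_add _ μ,
      Real.rpow_add (sub_pos.2 hy.1)]
    ring_nf
  rw [fracInt_congr hax.le hcongr, fracInt_sum_sub_rpow _ _ _ hμ₀ hs hax, eval_taylorScale,
    eval_coeffScale]
  refine Finset.sum_congr rfl fun n _ => ?_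
  rw [Pi.inv_apply, rlDHatEigenvalue, inv_div, sub_add_cancel, ← Real.rpow_natCast,
    show (n : ℝ) - μ + 1 = n + 1 - μ by ring, sub_add_cancel]
  ring

theorem stmt14 (k N : ℕ) (hk : k = 1 ∨ k = 2) (μ : ℝ) (hμ : (k : ℝ) - 1 < μ ∧ μ < k)
    (f : Polynomial ℝ) (hf : f.natDegree ≤ N) (hf0 : f.eval (-1) = 0) :
    ∃ u : Polynomial ℝ,
      (u.natDegree ≤ N ∧ u.eval (-1) = 0 ∧
        (∀ x ∈ Set.Ioo (-1 : ℝ) 1, rlDHat k μ (fun y => u.eval y) x = f.eval x) ∧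
        (∀ x ∈ Set.Ioo (-1 : ℝ) 1,
          u.eval x = fracInt (-1) μ (fun y => (1 + y) ^ (-μ) * f.eval y) x)) ∧
      (∀ v : Polynomial ℝ, v.natDegree ≤ N → v.eval (-1) = 0 →
        (∀ x ∈ Set.Ioo (-1 : ℝ) 1, rlDHat k μ (fun y => v.eval y) x = f.eval x) → v = u) := by
  obtain ⟨hμ₁, hμ₂⟩ := hμ
  have hμ₀ : 0 < μ ∧ μ < 2 := by
    rcases hk with rfl | rfl <;> norm_num at hμ₁ hμ₂ <;> constructor <;> linarith
  have hne : ∀ n, rlDHatEigenvalue μ n ≠ 0 := rlDHatEigenvalue_ne_zero fun m hm => by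
    subst hm
    have : k < m + 1 := by exact_mod_cast (by linarith : (k : ℝ) < m + 1)
    have : m < k := by exact_mod_cast hμ₂
    omega
  have hone : ∀ x : ℝ, 1 + x = x - -1 := fun x => by ring
  have hrlDHat (v : ℝ[X]) {x : ℝ} (hx : -1 < x) :
      rlDHat k μ (fun y => v.eval y) x = (taylorScale (-1) (rlDHatEigenvalue μ) v).eval x := by
    rw [rlDHat, hone, sub_rpow_mul_rlD_eval v hμ₂ hx]
  set u := taylorScale (-1) (rlDHatEigenvalue μ)⁻¹ f
  have hu : taylorScale (-1) (rlDHatEigenvalue μ) u = f := taylorScale_taylorScale_inv _ hne f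
  refine ⟨u, ⟨(natDegree_taylorScale_le _ _ f).trans hf, ?_, fun x hx => ?_, fun x hx => ?_⟩,
    fun v _ _ hv => taylorScale_injective (-1) hne (hu ▸ ?_)⟩
  · rw [eval_taylorScale_self, hf0, mul_zero]
  · rw [hrlDHat u hx.1, hu]
  · simp only [hone]
    rw [fracInt_sub_rpow_neg_mul_eval f hμ₀.1 hμ₀.2 hf0 hx.1]
  · refine eq_of_infinite_eval_eq _ _ ((Set.Ioo_infinite (by norm_num : (-1 : ℝ) < 1)).mono ?_)
    intro x hx
    exact (hrlDHat v hx.1).symm.trans (hv x hx)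
end
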